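/- arXiv:2602.20921 — 2 statements merged into one kernel-verified Lean document; each statement's English description precedes it below -/
import Mathlib

section
/- Let Z = {z_s}_{s=1}^S ⊂ ℝ^N with ‖z_s‖₂ = 1 for all s, and let 𝒢 = {c₁‖·‖₂ + c₂ : (c₁,c₂) ∈ [0,η]×[α,γ] or (c₁,c₂) ∈ [−η,0]×[−γ,−β]} where 0 < max{α, β} < γ and η > 0. Then the empirical Rademacher complexity of 𝒢 on Z equals (1/2^{S−1})·(η + γ)·C(S−1, ⌊S/2⌋), where C(n, k) is the binomial coefficient. -/
open scoped BigOperators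

/-- Empirical Rademacher complexity. -/
noncomputable def rad {ι : Type*} {S : ℕ} (F : Set (ι → ℝ)) (z : Fin S → ι) : ℝ :=
  (∑ ε : Fin S → Bool, ⨆ f ∈ F, ∑ s, (if ε s then (1:ℝ) else -1) * f (z s)) /
    (2 ^ S * S)

lemma abs_key_stmt6 (t : ℤ) : |1 + t| + |(-1) + t| = 2*|t| + (if t = 0 then 2 else 0) := by
  split_ifs with h
  · simp [h]
  · simp only [Int.abs_eq_natAbs]; omega

lemma count_k_stmt6 (n k : ℕ) :
    (Finset.univ.filter fun ε : Fin n → Bool =>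
      (Finset.univ.filter fun s => ε s).card = k).card = n.choose k := by
  have hT : (Finset.powersetCard k (Finset.univ : Finset (Fin n))).card = n.choose k := by
    simp [Finset.card_powersetCard]
  rw [← hT]
  apply Finset.card_bij (fun ε _ => Finset.univ.filter fun s => ε s)
  · intro ε hε
    simp only [Finset.mem_filter] at hε
    simp [Finset.mem_powersetCard, hε.2]
  · intro ε₁ h₁ ε₂ h₂ h
    funext s
    have := Finset.ext_iff.mp h s
    simpa using this
  · intro A hA
    refine ⟨fun s => s ∈ A, ?_, ?_⟩
    · simp only [Finset.mem_filter, Finset.mem_powersetCard] at hA ⊢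
      refine ⟨Finset.mem_univ _, ?_⟩
      rw [← hA.2]; congr 1; ext s; simp
    · ext s; simp

lemma count_zero_stmt6 (n : ℕ) :
    (Finset.univ.filter fun ε : Fin n → Bool =>
      (∑ s, (if ε s then (1:ℤ) else -1)) = 0).card
      = if Even n then n.choose (n/2) else 0 := by
  have hsum : ∀ ε : Fin n → Bool, (∑ s, (if ε s then (1:ℤ) else -1))
      = 2 * ((Finset.univ.filter fun s => ε s).card : ℤ) - n := by
    intro ε
    have : ∀ s : Fin n, (if ε s then (1:ℤ) else -1) = 2 * (if ε s then (1:ℤ) else 0) - 1 := by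
      intro s; split <;> ring
    simp only [this, Finset.sum_sub_distrib, ← Finset.mul_sum, Finset.sum_boole,
      Finset.sum_const, Finset.card_univ, Fintype.card_fin, smul_eq_mul, mul_one, nsmul_eq_mul]
  split_ifs with h
  · obtain ⟨m, hm⟩ := h
    have heq : ∀ ε : Fin n → Bool, ((∑ s, (if ε s then (1:ℤ) else -1)) = 0)
        ↔ (Finset.univ.filter fun s => ε s).card = n / 2 := by
      intro ε
      rw [hsum ε]
      constructor <;> intro h' <;> omega
    simp only [heq]
    exact count_k_stmt6 n (n/2)
  · rw [Finset.card_eq_zero, Finset.filter_eq_empty_iff]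
    intro ε _
    rw [hsum ε]
    intro h'
    exact h ⟨(Finset.univ.filter fun s => ε s).card, by omega⟩

lemma central_stmt6 (m : ℕ) (hm : 0 < m) : (2*m).choose m = 2 * (2*m-1).choose m := by
  have hp := Nat.choose_succ_succ (2*m-1) (m-1)
  simp only [Nat.succ_eq_add_one] at hp
  rw [show 2*m-1+1 = 2*m from by omega, show m-1+1 = m from by omega] at hp
  have hs := Nat.choose_symm (n := 2*m-1) (k := m) (by omega)
  rw [show 2*m-1-m = m-1 from by omega] at hs
  omega

lemma msum_stmt6 : ∀ n : ℕ, ∑ ε : Fin n → Bool, |∑ s, (if ε s then (1:ℤ) else -1)|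
    = 2 * n * ((n-1).choose (n/2) : ℤ) := by
  intro n
  induction n with
  | zero => simp
  | succ n ih =>
    have hrec : ∑ ε : Fin (n+1) → Bool, |∑ s, (if ε s then (1:ℤ) else -1)|
        = 2 * (∑ ε : Fin n → Bool, |∑ s : Fin n, (if ε s then (1:ℤ) else -1)|)
        + 2 * ((Finset.univ.filter fun ε : Fin n → Bool =>
            (∑ s, (if ε s then (1:ℤ) else -1)) = 0).card : ℤ) := by
      rw [← Equiv.sum_comp (Fin.consEquiv (fun _ : Fin (n+1) => Bool))
        (fun ε => |∑ s, (if ε s then (1:ℤ) else -1)|), Fintype.sum_prod_type,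
        Fintype.sum_bool]
      have hcons : ∀ (b : Bool) (ε : Fin n → Bool),
          (∑ s : Fin (n+1), (if (Fin.consEquiv (fun _ : Fin (n+1) => Bool)) (b, ε) s then (1:ℤ) else -1))
          = (if b then (1:ℤ) else -1) + ∑ s : Fin n, (if ε s then (1:ℤ) else -1) := by
        intro b ε
        have hc : ((Fin.consEquiv (fun _ : Fin (n+1) => Bool)) (b, ε)) = Fin.cons b ε := rfl
        rw [hc, Fin.sum_univ_succ]
        simp
      have hconsT : ∀ ε : Fin n → Bool,
          (∑ s : Fin (n+1), (if (Fin.consEquiv (fun _ : Fin (n+1) => Bool)) (true, ε) s then (1:ℤ) else -1))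
          = 1 + ∑ s : Fin n, (if ε s then (1:ℤ) else -1) := by
        intro ε; rw [hcons]; norm_num
      have hconsF : ∀ ε : Fin n → Bool,
          (∑ s : Fin (n+1), (if (Fin.consEquiv (fun _ : Fin (n+1) => Bool)) (false, ε) s then (1:ℤ) else -1))
          = (-1) + ∑ s : Fin n, (if ε s then (1:ℤ) else -1) := by
        intro ε; rw [hcons]; norm_num
      simp only [hconsT, hconsF]
      rw [← Finset.sum_add_distrib]
      have key : ∀ ε : Fin n → Bool,
          |1 + ∑ s : Fin n, (if ε s then (1:ℤ) else -1)| +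
            |(-1) + ∑ s : Fin n, (if ε s then (1:ℤ) else -1)|
          = 2*|∑ s : Fin n, (if ε s then (1:ℤ) else -1)| +
            (if (∑ s : Fin n, (if ε s then (1:ℤ) else -1)) = 0 then 2 else 0) :=
        fun ε => abs_key_stmt6 _
      simp only [key]
      rw [Finset.sum_add_distrib, ← Finset.mul_sum, ← Finset.sum_filter,
        Finset.sum_const, nsmul_eq_mul]
      ring
    rw [hrec, ih, count_zero_stmt6]
    clear hrec ih
    rcases Nat.even_or_odd n with he | ho
    · obtain ⟨m, hm⟩ := he
      rw [if_pos ⟨m, hm⟩]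
      have hn : n = 2*m := by omega
      subst hn
      rcases Nat.eq_zero_or_pos m with rfl | hm0
      · norm_num
      · have hc := central_stmt6 m hm0
        rw [show 2*m+1-1 = 2*m from by omega, show (2*m+1)/2 = m from by omega,
          show (2*m)/2 = m from by omega]
        push_cast [hc]
        ring
    · rw [if_neg (Nat.not_even_iff_odd.mpr ho)]
      obtain ⟨m, hm⟩ := ho
      subst hm
      have hso := Nat.add_one_mul_choose_eq (2*m) m
      rw [show 2*m+1+1-1 = 2*m+1 from by omega, show (2*m+1+1)/2 = m+1 from by omega,
        show 2*m+1-1 = 2*m from by omega, show (2*m+1)/2 = m from by omega]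
      have hz : (2*m+1) * (2*m).choose m = (2*m+1).choose (m+1) * (m+1) := hso
      have hzc : ((2*m+1) * (2*m).choose m : ℤ) = ((2*m+1).choose (m+1) * (m+1) : ℕ) := by
        exact_mod_cast congrArg (Nat.cast : ℕ → ℤ) hz
      push_cast at hzc
      push_cast
      nlinarith [hzc]

/-- for unit-norm samples and the class
𝒢 = {c₁‖·‖₂ + c₂ : (c₁,c₂) ∈ [0,η]×[α,γ] ∪ [−η,0]×[−γ,−β]},
ℛ_Z(𝒢) = (1/2^{S−1})(η+γ)·C(S−1, ⌊S/2⌋). -/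
theorem stmt_6 {N S : ℕ} (hS : 0 < S) (α β γ η : ℝ)
    (hα : 0 < α) (hβ : 0 < β) (hη : 0 < η) (hγ : max α β < γ)
    (z : Fin S → EuclideanSpace ℝ (Fin N)) (hz : ∀ s, ‖z s‖ = 1)
    (G : Set (EuclideanSpace ℝ (Fin N) → ℝ))
    (hG : G = {g | ∃ c₁ c₂ : ℝ,
      ((c₁ ∈ Set.Icc 0 η ∧ c₂ ∈ Set.Icc α γ) ∨
       (c₁ ∈ Set.Icc (-η) 0 ∧ c₂ ∈ Set.Icc (-γ) (-β))) ∧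
      g = fun x => c₁ * ‖x‖ + c₂}) :
    rad G z = (1 / 2 ^ (S - 1)) * (η + γ) * ((S - 1).choose (S / 2)) := by
  have hαγ : α < γ := lt_of_le_of_lt (le_max_left α β) hγ
  have hβγ : β < γ := lt_of_le_of_lt (le_max_right α β) hγ
  have hηγ : 0 < η + γ := by linarith
  have hsup : ∀ ε : Fin S → Bool,
      (⨆ f ∈ G, ∑ s, (if ε s then (1:ℝ) else -1) * f (z s))
        = (η + γ) * |∑ s, (if ε s then (1:ℝ) else -1)| := by
    intro ε
    set T := ∑ s, (if ε s then (1:ℝ) else -1) with hT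
    have hnn : (0:ℝ) ≤ (η + γ) * |T| := mul_nonneg (le_of_lt hηγ) (abs_nonneg _)
    have hval : ∀ c₁ c₂ : ℝ,
        (∑ s, (if ε s then (1:ℝ) else -1) * ((fun x => c₁ * ‖x‖ + c₂) (z s))) = T * (c₁ + c₂) := by
      intro c₁ c₂
      simp only [hz, mul_one]
      rw [hT]
      exact (Finset.sum_mul _ _ _).symm
    have hbound : ∀ g ∈ G, (∑ s, (if ε s then (1:ℝ) else -1) * g (z s)) ≤ (η+γ)*|T| := by
      intro g hg
      rw [hG] at hg
      obtain ⟨c₁, c₂, hcc, rfl⟩ := hg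
      rw [hval]
      have habs : |c₁ + c₂| ≤ η + γ := by
        rcases hcc with ⟨h1, h2⟩ | ⟨h1, h2⟩ <;>
          rw [Set.mem_Icc] at h1 h2 <;>
          exact abs_le.mpr ⟨by linarith, by linarith⟩
      calc T*(c₁+c₂) ≤ |T * (c₁+c₂)| := le_abs_self _
        _ = |T| * |c₁+c₂| := abs_mul _ _
        _ ≤ |T| * (η+γ) := mul_le_mul_of_nonneg_left habs (abs_nonneg _)
        _ = (η+γ) * |T| := mul_comm _ _
    obtain ⟨c₁, c₂, hmem, hvaleq⟩ : ∃ c₁ c₂ : ℝ,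
        ((fun x : EuclideanSpace ℝ (Fin N) => c₁ * ‖x‖ + c₂) ∈ G) ∧ T*(c₁+c₂) = (η+γ)*|T| := by
      rcases le_or_gt 0 T with hT0 | hT0
      · refine ⟨η, γ, ?_, ?_⟩
        · rw [hG]
          exact ⟨η, γ, Or.inl ⟨Set.mem_Icc.mpr ⟨le_of_lt hη, le_refl η⟩,
            Set.mem_Icc.mpr ⟨le_of_lt hαγ, le_refl γ⟩⟩, rfl⟩
        · rw [abs_of_nonneg hT0]; ring
      · refine ⟨-η, -γ, ?_, ?_⟩
        · rw [hG]
          exact ⟨-η, -γ, Or.inr ⟨Set.mem_Icc.mpr ⟨le_refl (-η), by linarith⟩,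
            Set.mem_Icc.mpr ⟨le_refl (-γ), by linarith⟩⟩, rfl⟩
        · rw [abs_of_neg hT0]; ring
    apply le_antisymm
    · exact Real.iSup_le (fun g => Real.iSup_le (fun hg => hbound g hg) hnn) hnn
    · have hbdd : BddAbove (Set.range fun g => ⨆ _ : g ∈ G,
          ∑ s, (if ε s then (1:ℝ) else -1) * g (z s)) := by
        refine ⟨(η+γ)*|T|, ?_⟩
        rintro x ⟨g, rfl⟩
        exact Real.iSup_le (fun hg => hbound g hg) hnn
      refine le_ciSup_of_le hbdd (fun x => c₁ * ‖x‖ + c₂) ?_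
      haveI : Nonempty ((fun x : EuclideanSpace ℝ (Fin N) => c₁ * ‖x‖ + c₂) ∈ G) := ⟨hmem⟩
      rw [ciSup_const, hval]
      exact le_of_eq hvaleq.symm
  have hcast : ∀ ε : Fin S → Bool, |∑ s, (if ε s then (1:ℝ) else -1)|
      = ((|∑ s, (if ε s then (1:ℤ) else -1)| : ℤ) : ℝ) := by
    intro ε
    rw [Int.cast_abs, Int.cast_sum]
    norm_num [apply_ite (fun t : ℤ => (t : ℝ))]
  rw [rad]
  rw [Finset.sum_congr rfl fun ε _ => hsup ε]
  simp only [hcast]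
  rw [← Finset.mul_sum, ← Int.cast_sum, msum_stmt6 S]
  have h2 : (2:ℝ)^S = 2^(S-1)*2 := by
    rw [← pow_succ, Nat.sub_add_cancel hS]
  have hSne : (S:ℝ) ≠ 0 := Nat.cast_ne_zero.mpr hS.ne'
  push_cast
  rw [h2]
  field_simp
end

section
/- With Z and 𝒢 as in the previous setting, and ψ(x) = (x−α)·1_{[0,∞)}(x−α) − (−x−β)·1_{[0,∞)}(−x−β) (a two-sided soft-thresholding function), the empirical Rademacher complexity of ψ ∘ 𝒢 on Z equals (1/2^S)·(2η + 2γ − α − β)·C(S−1, ⌊S/2⌋). In particular, ℛ_Z(ψ ∘ 𝒢) ≤ 1·ℛ_Z(𝒢) − ((α+β)/S)·(S/2^S)·C(S−1, ⌊S/2⌋), i.e., the contraction inequality holds with a strictly negative correction term. -/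
open scoped BigOperators

open Finset

lemma biSup_eq_of_isGreatest {ι : Type*} {F : Set ι} {T : ι → ℝ} {M : ℝ} (hM : 0 ≤ M)
    (hmem : ∃ f ∈ F, T f = M) (hub : ∀ f ∈ F, T f ≤ M) : ⨆ f ∈ F, T f = M := by
  apply le_antisymm
  · refine Real.iSup_le (fun f => ?_) hM
    exact Real.iSup_le (fun hf => hub f hf) hM
  · obtain ⟨f₀, h₀, hT⟩ := hmem
    have hbdd : BddAbove (Set.range fun f => ⨆ _ : f ∈ F, T f) := by
      refine ⟨M, ?_⟩
      rintro x ⟨f, rfl⟩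
      exact Real.iSup_le (fun hf => hub f hf) hM
    refine le_ciSup_of_le hbdd f₀ ?_
    rw [ciSup_pos h₀, hT]

def finsetBoolEquiv (S : ℕ) : Finset (Fin S) ≃ (Fin S → Bool) :=
  { toFun := fun t s => decide (s ∈ t)
    invFun := fun ε => Finset.univ.filter (fun s => ε s = true)
    left_inv := fun t => by ext s; simp
    right_inv := fun ε => by funext s; simp }

lemma sum_eps_eq {S : ℕ} (Φ : ℝ → ℝ) :
    ∑ ε : Fin S → Bool, Φ (∑ s, if ε s then (1:ℝ) else -1)
      = ∑ j ∈ range (S+1), (S.choose j : ℝ) * Φ (2*(j:ℝ) - S) := by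
  classical
  rw [← Equiv.sum_comp (finsetBoolEquiv S) (fun ε => Φ (∑ s, if ε s then (1:ℝ) else -1))]
  have hval : ∀ t : Finset (Fin S),
      (∑ s, if finsetBoolEquiv S t s then (1:ℝ) else -1) = 2*(#t:ℝ) - S := by
    intro t
    have : ∀ s, (if finsetBoolEquiv S t s then (1:ℝ) else -1) = (if s ∈ t then (2:ℝ) else 0) - 1 := by
      intro s
      show (if decide (s ∈ t) then (1:ℝ) else -1) = _
      by_cases h : s ∈ t <;> simp [h] <;> norm_num
    rw [Finset.sum_congr rfl (fun s _ => this s), Finset.sum_sub_distrib]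
    rw [Finset.sum_ite_mem, Finset.univ_inter, Finset.sum_const, Finset.sum_const]
    simp [mul_comm]
  calc ∑ t : Finset (Fin S), Φ (∑ s, if finsetBoolEquiv S t s then (1:ℝ) else -1)
      = ∑ t : Finset (Fin S), Φ (2*(#t:ℝ) - S) := by
        exact Finset.sum_congr rfl (fun t _ => by rw [hval t])
    _ = ∑ t ∈ (univ : Finset (Fin S)).powerset, Φ (2*(#t:ℝ) - S) := by
        rw [Finset.powerset_univ]
    _ = ∑ j ∈ range (S+1), ∑ t ∈ powersetCard j (univ : Finset (Fin S)), Φ (2*(#t:ℝ) - S) := by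
        rw [Finset.sum_powerset]
        simp
    _ = ∑ j ∈ range (S+1), (S.choose j : ℝ) * Φ (2*(j:ℝ) - S) := by
        refine Finset.sum_congr rfl (fun j _ => ?_)
        rw [Finset.sum_powersetCard j univ (fun n => Φ (2*(n:ℝ) - S))]
        simp [nsmul_eq_mul, card_univ, mul_comm]

lemma key_comb (S : ℕ) (hS : 0 < S) :
    ∑ j ∈ range (S+1), (S.choose j : ℝ) * max (2*(j:ℝ) - (S:ℝ)) 0
      = S * (S-1).choose (S/2) := by
  set m := S / 2 with hm
  have hmS : m + 1 ≤ S + 1 := by omega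
  rw [← Finset.sum_range_add_sum_Ico _ hmS]
  have h1 : ∑ j ∈ range (m+1), (S.choose j : ℝ) * max (2*(j:ℝ) - S) 0 = 0 := by
    apply Finset.sum_eq_zero
    intro j hj
    rw [mem_range] at hj
    have h2j : 2 * j ≤ S := by omega
    have : (2*(j:ℝ)) - S ≤ 0 := by
      have := (Nat.cast_le (α := ℝ)).2 h2j
      push_cast at this ⊢
      linarith
    rw [max_eq_right this, mul_zero]
  rw [h1, zero_add]
  have hterm : ∀ j ∈ Ico (m+1) (S+1), (S.choose j : ℝ) * max (2*(j:ℝ) - S) 0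
      = S * (((S-1).choose (j-1) : ℝ) - (S-1).choose j) := by
    intro j hj
    rw [mem_Ico] at hj
    have hjS : j ≤ S := by omega
    have hj1 : 1 ≤ j := by omega
    have h2j : S < 2 * j := by omega
    have hmax : max (2*(j:ℝ) - S) 0 = 2*(j:ℝ) - S := by
      apply max_eq_left
      have := (Nat.cast_lt (α := ℝ)).2 h2j
      push_cast at this ⊢; linarith
    rw [hmax]
    have hS1 : S - 1 + 1 = S := by omega
    have hj1' : j - 1 + 1 = j := by omega
    have e1 : S * (S-1).choose (j-1) = S.choose j * j := by
      have := Nat.add_one_mul_choose_eq (S-1) (j-1)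
      simp only [Nat.succ_eq_add_one, hS1, hj1'] at this
      exact this
    have e2 : S * (S-1).choose j = S.choose j * (S - j) := by
      rcases eq_or_lt_of_le hjS with h | h
      · subst h
        rw [Nat.choose_eq_zero_of_lt (by omega), Nat.sub_self, mul_zero, mul_zero]
      · have hj' : j ≤ S - 1 := by omega
        have hsymm : (S-1).choose j = (S-1).choose (S-1-j) := (Nat.choose_symm hj').symm
        rw [hsymm]
        have hj2 : S - 1 - j + 1 = S - j := by omega
        have := Nat.add_one_mul_choose_eq (S-1) (S-1-j)
        simp only [Nat.succ_eq_add_one, hS1, hj2] at this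
        rw [this]
        congr 1
        rw [← Nat.choose_symm (by omega : S - j ≤ S)]
        congr 1
        omega
    have e1' : (S:ℝ) * (S-1).choose (j-1) = S.choose j * j := by exact_mod_cast e1
    have e2' : (S:ℝ) * (S-1).choose j = S.choose j * ((S:ℝ) - j) := by
      have : (S:ℝ) * (S-1).choose j = (S.choose j : ℝ) * ((S - j : ℕ) : ℝ) := by exact_mod_cast e2
      rw [this, Nat.cast_sub hjS]
    linear_combination e2' - e1'
  rw [Finset.sum_congr rfl hterm, ← Finset.mul_sum]
  have htel : ∑ j ∈ Ico (m+1) (S+1), ((((S-1).choose (j-1) : ℝ)) - (S-1).choose j)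
      = (S-1).choose m := by
    have hre : ∑ j ∈ Ico (m+1) (S+1), ((((S-1).choose (j-1) : ℝ)) - (S-1).choose j)
        = ∑ i ∈ range (S - m), ((((S-1).choose (m+i) : ℝ)) - (S-1).choose (m+(i+1))) := by
      rw [Finset.sum_Ico_eq_sum_range]
      apply Finset.sum_congr (by congr 1; omega)
      intro i _
      have h1 : m + 1 + i - 1 = m + i := by omega
      have h2 : m + 1 + i = m + (i + 1) := by omega
      rw [h1, h2]
    rw [hre, Finset.sum_range_sub' (fun i => ((S-1).choose (m+i) : ℝ))]
    have h3 : m + (S - m) = S := by omega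
    simp only [h3, Nat.add_zero]
    rw [Nat.choose_eq_zero_of_lt (show S - 1 < S by omega), Nat.cast_zero, sub_zero]
  rw [htel]

lemma key_comb' (S : ℕ) (hS : 0 < S) :
    ∑ j ∈ range (S+1), (S.choose j : ℝ) * max (-(2*(j:ℝ) - (S:ℝ))) 0
      = S * (S-1).choose (S/2) := by
  rw [← key_comb S hS]
  rw [← Finset.sum_range_reflect]
  refine Finset.sum_congr rfl (fun j hj => ?_)
  rw [mem_range] at hj
  have hjS : j ≤ S := by omega
  have h1 : S + 1 - 1 - j = S - j := by omega
  rw [h1, Nat.choose_symm hjS]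
  congr 1
  congr 1
  rw [Nat.cast_sub hjS]
  ring

/-- with the two-sided soft-thresholding activation ψ,
ℛ_Z(ψ∘𝒢) = (1/2^S)(2η+2γ−α−β)·C(S−1,⌊S/2⌋), and the contraction inequality
holds with a strictly negative correction term:
ℛ_Z(ψ∘𝒢) ≤ 1·ℛ_Z(𝒢) − ((α+β)/S)·(S/2^S)·C(S−1,⌊S/2⌋). -/
theorem stmt_7 {N S : ℕ} (hS : 0 < S) (α β γ η : ℝ)
    (hα : 0 < α) (hβ : 0 < β) (hη : 0 < η) (hγ : max α β < γ)
    (z : Fin S → EuclideanSpace ℝ (Fin N)) (hz : ∀ s, ‖z s‖ = 1)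
    (G : Set (EuclideanSpace ℝ (Fin N) → ℝ))
    (hG : G = {g | ∃ c₁ c₂ : ℝ,
      ((c₁ ∈ Set.Icc 0 η ∧ c₂ ∈ Set.Icc α γ) ∨
       (c₁ ∈ Set.Icc (-η) 0 ∧ c₂ ∈ Set.Icc (-γ) (-β))) ∧
      g = fun x => c₁ * ‖x‖ + c₂})
    (ψ : ℝ → ℝ)
    (hψ : ∀ x, ψ x = (if 0 ≤ x - α then x - α else 0) -
                      (if 0 ≤ -x - β then -x - β else 0)) :
    rad ((fun g => ψ ∘ g) '' G) z =
      (1 / 2 ^ S) * (2 * η + 2 * γ - α - β) * ((S - 1).choose (S / 2)) ∧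
    rad ((fun g => ψ ∘ g) '' G) z ≤
      1 * rad G z - ((α + β) / S) * ((S : ℝ) / 2 ^ S * ((S - 1).choose (S / 2))) := by

  have hαγ : α < γ := lt_of_le_of_lt (le_max_left α β) hγ
  have hβγ : β < γ := lt_of_le_of_lt (le_max_right α β) hγ
  -- sign sum
  set kk : (Fin S → Bool) → ℝ := fun ε => ∑ s, if ε s then (1:ℝ) else -1 with hkk
  -- ψ evaluated on the relevant range
  have hψ_val : ∀ v : ℝ, (α ≤ v ∧ v ≤ η + γ) → ψ v = v - α := by
    intro v ⟨h1, h2⟩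
    rw [hψ v, if_pos (by linarith), if_neg (by push_neg; nlinarith), sub_zero]
  have hψ_val' : ∀ v : ℝ, (-η - γ ≤ v ∧ v ≤ -β) → ψ v = v + β := by
    intro v ⟨h1, h2⟩
    rw [hψ v, if_neg (by push_neg; nlinarith), if_pos (by linarith)]
    ring
  -- bounds on ψ over both branches
  have hψ_lb : ∀ v : ℝ, ((α ≤ v ∧ v ≤ η + γ) ∨ (-η - γ ≤ v ∧ v ≤ -β)) →
      β - η - γ ≤ ψ v ∧ ψ v ≤ η + γ - α := by
    rintro v (⟨h1, h2⟩ | ⟨h1, h2⟩)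
    · rw [hψ_val v ⟨h1, h2⟩]; constructor <;> nlinarith
    · rw [hψ_val' v ⟨h1, h2⟩]; constructor <;> nlinarith
  -- the constant value of g on the sphere
  have hg_const : ∀ c₁ c₂ : ℝ, ∀ s, c₁ * ‖z s‖ + c₂ = c₁ + c₂ := by
    intro c₁ c₂ s; rw [hz s, mul_one]
  -- sum collapses to kk ε times a constant
  have hsum_const : ∀ (ε : Fin S → Bool) (c : ℝ),
      (∑ s, (if ε s then (1:ℝ) else -1) * c) = kk ε * c := by
    intro ε c
    rw [hkk]
    rw [← Finset.sum_mul]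
  -- supremum for ψ ∘ G
  have hsupF : ∀ ε : Fin S → Bool,
      (⨆ f ∈ ((fun g => ψ ∘ g) '' G), ∑ s, (if ε s then (1:ℝ) else -1) * f (z s))
        = max (kk ε) 0 * (η + γ - α) + max (-(kk ε)) 0 * (η + γ - β) := by
    intro ε
    apply biSup_eq_of_isGreatest
    · have := le_max_right (kk ε) 0
      have := le_max_right (-(kk ε)) 0
      nlinarith [le_max_right (kk ε) 0, le_max_right (-(kk ε)) 0]
    · rcases le_or_gt 0 (kk ε) with hk | hk
      · refine ⟨ψ ∘ (fun x => η * ‖x‖ + γ), ⟨fun x => η * ‖x‖ + γ, ?_, rfl⟩, ?_⟩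
        · rw [hG]
          exact ⟨η, γ, Or.inl ⟨⟨le_of_lt hη, le_refl η⟩, ⟨le_of_lt hαγ, le_refl γ⟩⟩, rfl⟩
        · have : ∀ s, (ψ ∘ fun x => η * ‖x‖ + γ) (z s) = η + γ - α := by
            intro s
            show ψ (η * ‖z s‖ + γ) = _
            rw [hg_const, hψ_val (η + γ) ⟨by linarith, le_refl _⟩]
          rw [Finset.sum_congr rfl (fun s _ => by rw [this s]), hsum_const ε (η + γ - α)]
          rw [max_eq_left hk, max_eq_right (by linarith)]
          ring
      · refine ⟨ψ ∘ (fun x => -η * ‖x‖ + -γ), ⟨fun x => -η * ‖x‖ + -γ, ?_, rfl⟩, ?_⟩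
        · rw [hG]
          exact ⟨-η, -γ, Or.inr ⟨⟨le_refl _, by linarith⟩, ⟨le_refl _, by linarith⟩⟩, rfl⟩
        · have : ∀ s, (ψ ∘ fun x => -η * ‖x‖ + -γ) (z s) = -(η + γ - β) := by
            intro s
            show ψ (-η * ‖z s‖ + -γ) = _
            rw [hg_const, hψ_val' (-η + -γ) ⟨by linarith, by linarith⟩]
            ring
          rw [Finset.sum_congr rfl (fun s _ => by rw [this s]), hsum_const ε (-(η + γ - β))]
          rw [max_eq_right (le_of_lt hk), max_eq_left (by linarith)]
          ring
    · rintro f ⟨g, hgG, rfl⟩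
      rw [hG] at hgG
      obtain ⟨c₁, c₂, hc, rfl⟩ := hgG
      have hval : ∀ s, (ψ ∘ fun x => c₁ * ‖x‖ + c₂) (z s) = ψ (c₁ + c₂) := by
        intro s
        show ψ (c₁ * ‖z s‖ + c₂) = _
        rw [hg_const]
      beta_reduce
      rw [Finset.sum_congr rfl (fun s _ => by rw [hval s]), hsum_const ε (ψ (c₁ + c₂))]
      have hbr : (α ≤ c₁ + c₂ ∧ c₁ + c₂ ≤ η + γ) ∨ (-η - γ ≤ c₁ + c₂ ∧ c₁ + c₂ ≤ -β) := by
        rcases hc with ⟨⟨ha, hb⟩, ⟨hcc, hd⟩⟩ | ⟨⟨ha, hb⟩, ⟨hcc, hd⟩⟩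
        · left; constructor <;> linarith
        · right; constructor <;> linarith
      obtain ⟨hlb, hub⟩ := hψ_lb (c₁ + c₂) hbr
      rcases le_or_gt 0 (kk ε) with hk | hk
      · rw [max_eq_left hk, max_eq_right (by linarith)]
        nlinarith
      · rw [max_eq_right (le_of_lt hk), max_eq_left (by linarith)]
        nlinarith
  -- supremum for G
  have hsupG : ∀ ε : Fin S → Bool,
      (⨆ g ∈ G, ∑ s, (if ε s then (1:ℝ) else -1) * g (z s))
        = max (kk ε) 0 * (η + γ) + max (-(kk ε)) 0 * (η + γ) := by
    intro ε
    apply biSup_eq_of_isGreatest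
    · nlinarith [le_max_right (kk ε) 0, le_max_right (-(kk ε)) 0]
    · rcases le_or_gt 0 (kk ε) with hk | hk
      · refine ⟨fun x => η * ‖x‖ + γ, ?_, ?_⟩
        · rw [hG]
          exact ⟨η, γ, Or.inl ⟨⟨le_of_lt hη, le_refl η⟩, ⟨le_of_lt hαγ, le_refl γ⟩⟩, rfl⟩
        · beta_reduce
          rw [Finset.sum_congr rfl (fun s _ => by rw [hg_const η γ s]), hsum_const ε (η + γ)]
          rw [max_eq_left hk, max_eq_right (by linarith)]
          ring
      · refine ⟨fun x => -η * ‖x‖ + -γ, ?_, ?_⟩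
        · rw [hG]
          exact ⟨-η, -γ, Or.inr ⟨⟨le_refl _, by linarith⟩, ⟨le_refl _, by linarith⟩⟩, rfl⟩
        · beta_reduce
          rw [Finset.sum_congr rfl (fun s _ => by rw [hg_const (-η) (-γ) s]), hsum_const ε (-η + -γ)]
          rw [max_eq_right (le_of_lt hk), max_eq_left (by linarith)]
          ring
    · rintro g hgG
      rw [hG] at hgG
      obtain ⟨c₁, c₂, hc, rfl⟩ := hgG
      beta_reduce
      rw [Finset.sum_congr rfl (fun s _ => by rw [hg_const c₁ c₂ s]), hsum_const ε (c₁ + c₂)]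
      have hbnd : -η - γ ≤ c₁ + c₂ ∧ c₁ + c₂ ≤ η + γ := by
        rcases hc with ⟨⟨ha, hb⟩, ⟨hcc, hd⟩⟩ | ⟨⟨ha, hb⟩, ⟨hcc, hd⟩⟩ <;> constructor <;> linarith
      obtain ⟨hlb, hub⟩ := hbnd
      rcases le_or_gt 0 (kk ε) with hk | hk
      · rw [max_eq_left hk, max_eq_right (by linarith)]
        nlinarith
      · rw [max_eq_right (le_of_lt hk), max_eq_left (by linarith)]
        nlinarith
  -- sums of positive and negative parts
  have hKpos : ∑ ε : Fin S → Bool, max (kk ε) 0 = (S:ℝ) * (S-1).choose (S/2) := by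
    rw [hkk]
    rw [sum_eps_eq (fun x => max x 0)]
    exact key_comb S hS
  have hKneg : ∑ ε : Fin S → Bool, max (-(kk ε)) 0 = (S:ℝ) * (S-1).choose (S/2) := by
    rw [hkk]
    rw [sum_eps_eq (fun x => max (-x) 0)]
    exact key_comb' S hS
  set C : ℝ := ((S-1).choose (S/2) : ℝ) with hC
  -- numerator computations
  have hnumF : (∑ ε : Fin S → Bool, ⨆ f ∈ ((fun g => ψ ∘ g) '' G),
      ∑ s, (if ε s then (1:ℝ) else -1) * f (z s))
        = (S:ℝ) * C * (2*η + 2*γ - α - β) := by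
    rw [Finset.sum_congr rfl (fun ε _ => hsupF ε)]
    rw [Finset.sum_add_distrib, ← Finset.sum_mul, ← Finset.sum_mul, hKpos, hKneg]
    ring
  have hnumG : (∑ ε : Fin S → Bool, ⨆ g ∈ G,
      ∑ s, (if ε s then (1:ℝ) else -1) * g (z s))
        = (S:ℝ) * C * (2*η + 2*γ) := by
    rw [Finset.sum_congr rfl (fun ε _ => hsupG ε)]
    rw [Finset.sum_add_distrib, ← Finset.sum_mul, ← Finset.sum_mul, hKpos, hKneg]
    ring
  have hSne : (S:ℝ) ≠ 0 := Nat.cast_ne_zero.mpr (Nat.pos_iff_ne_zero.mp hS)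
  have h2ne : (2:ℝ) ^ S ≠ 0 := pow_ne_zero S two_ne_zero
  have hradF : rad ((fun g => ψ ∘ g) '' G) z = (1 / 2 ^ S) * (2*η + 2*γ - α - β) * C := by
    rw [rad, hnumF]
    field_simp
  have hradG : rad G z = (1 / 2 ^ S) * (2*η + 2*γ) * C := by
    rw [rad, hnumG]
    field_simp
  constructor
  · rw [hradF]
  · rw [hradF, hradG]
    apply le_of_eq
    field_simp
    ring
end
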